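/- Let F be a field, n ≥ 1, s = s_0,…,s_{1-n} over F, and (μ, μ') the pair from the minimal-solution algorithm with ∇ = μ_2 μ'_1 − μ_1 μ'_2 ∈ F^×. Let f = (f_1, f_2) be a solution for s with deg f_1 ≤ n, and set m = f_2 μ_1 − f_1 μ_2, m' = f_2 μ'_1 − f_1 μ'_2. Then gcd(m, m') = gcd(f_1, f_2). -/
import Mathlib

open Polynomial in
/-- φ of degree d satisfies the annihilating condition for the length-`n` sequence
`s₀, s₋₁, …, s₁₋ₙ` (where `s k` denotes `s₋ₖ`). -/
def AnnCond {D : Type*} [CommRing D] (n : ℕ) (s : ℕ → D) (φ : Polynomial D) : Prop :=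
  ∀ t : ℕ, t + φ.natDegree + 1 ≤ n →
    ∑ j ∈ Finset.range (φ.natDegree + 1), φ.coeff j * s (t + j) = 0

/-- φ is a nonzero annihilating polynomial of the length-`n` sequence `s`. -/
def Annihilates {D : Type*} [CommRing D] (n : ℕ) (s : ℕ → D) (φ : Polynomial D) : Prop :=
  φ ≠ 0 ∧ AnnCond n s φ

/-- Linear complexity: minimal degree of a nonzero annihilating polynomial. -/
noncomputable def LC {D : Type*} [CommRing D] (n : ℕ) (s : ℕ → D) : ℕ :=
  sInf {d | ∃ φ : Polynomial D, Annihilates n s φ ∧ φ.natDegree = d}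

/-- `x·ψ = [φ·s̄]`, the strictly-positive-degree part of `φ·s̄`, expressed coefficientwise. -/
def SeqNum {D : Type*} [CommRing D] (n : ℕ) (s : ℕ → D) (φ ψ : Polynomial D) : Prop :=
  ∀ k : ℕ, ψ.coeff k = ∑ j ∈ Finset.range (φ.natDegree + 1),
    if k + 1 ≤ j ∧ j - (k + 1) < n then φ.coeff j * s (j - (k + 1)) else 0

/-- `(φ, ψ)` is a solution for the length-`n` sequence `s`. -/
def IsSolution {D : Type*} [CommRing D] (n : ℕ) (s : ℕ → D) (φ ψ : Polynomial D) : Prop :=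
  Annihilates n s φ ∧ SeqNum n s φ ψ
/-- Discrepancy `Δ(φ; s₀,…,s₋ₖ)` of `φ` with respect to the length-`(k+1)` prefix:
the coefficient `(φ·t̄)_{deg φ − k}`. -/
noncomputable def disc {D : Type*} [CommRing D] (s : ℕ → D) (k : ℕ) (φ : Polynomial D) : D :=
  ∑ j ∈ Finset.range (φ.natDegree + 1),
    if φ.natDegree ≤ j + k then φ.coeff j * s (j + k - φ.natDegree) else 0
/-- State of the Berlekamp–Massey-type algorithm (Algorithm 4.1):
current minimal solution `μ`, auxiliary previous solution `μ'`,
previous nonzero discrepancy `Δ'₁`, the integer `e`, and the product `∇` of discrepancies. -/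
structure BMState (D : Type*) [CommRing D] where
  mu : Polynomial D × Polynomial D
  mu' : Polynomial D × Polynomial D
  dp : D
  e : ℤ
  nabla : D

open Polynomial in
/-- One iteration of the algorithm, processing the term `s₋ₖ`. -/
noncomputable def bmStep {D : Type*} [CommRing D] [DecidableEq D]
    (s : ℕ → D) (k : ℕ) (st : BMState D) : BMState D :=
  let Δ := disc s k st.mu.1
  if Δ = 0 then { st with e := st.e + 1 }
  else if st.e ≤ 0 then
    { st with
      mu := (C st.dp * st.mu.1 - C Δ * X ^ (-st.e).toNat * st.mu'.1,
             C st.dp * st.mu.2 - C Δ * X ^ (-st.e).toNat * st.mu'.2),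
      nabla := st.dp * st.nabla,
      e := st.e + 1 }
  else
    { mu := (C st.dp * X ^ st.e.toNat * st.mu.1 - C Δ * st.mu'.1,
             C st.dp * X ^ st.e.toNat * st.mu.2 - C Δ * st.mu'.2),
      mu' := st.mu,
      dp := Δ,
      nabla := Δ * st.nabla,
      e := -st.e + 1 }

/-- Running the algorithm on the first `n` terms `s₀, …, s₁₋ₙ`
starting from `μ = (1,0)`, `μ' = (0,−1)`, `Δ'₁ = 1`, `e = 1`, `∇ = 1`. -/
noncomputable def bmRun {D : Type*} [CommRing D] [DecidableEq D] (s : ℕ → D) : ℕ → BMState D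
  | 0 => ⟨(1, 0), (0, -1), 1, 1, 1⟩
  | (k + 1) => bmStep s k (bmRun s k)

open Polynomial in
lemma bmRun_det {F : Type*} [Field F] [DecidableEq F] (s : ℕ → F) (k : ℕ) :
    (bmRun s k).mu.2 * (bmRun s k).mu'.1 - (bmRun s k).mu.1 * (bmRun s k).mu'.2
      = C (bmRun s k).nabla ∧ (bmRun s k).nabla ≠ 0 ∧ (bmRun s k).dp ≠ 0 := by
  induction k with
  | zero => simp [bmRun]
  | succ k ih =>
    obtain ⟨hdet, hnab, hdp⟩ := ih
    have hrw : bmRun s (k+1) = bmStep s k (bmRun s k) := rfl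
    rw [hrw]
    unfold bmStep
    by_cases h0 : disc s k (bmRun s k).mu.1 = 0
    · simpa [h0] using ⟨hdet, hnab, hdp⟩
    · by_cases he : (bmRun s k).e ≤ 0
      · simp only [h0, he, if_true, if_false]
        refine ⟨?_, mul_ne_zero hdp hnab, hdp⟩
        simp only [map_mul]
        rw [← hdet]; ring
      · simp only [h0, he, if_false]
        refine ⟨?_, mul_ne_zero h0 hnab, h0⟩
        simp only [map_mul]
        rw [← hdet]; ring

/-- For a solution `f` with `deg f₁ ≤ n` and `m = ⟨f,μ⟩`, `m' = ⟨f,μ'⟩` formed with the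
algorithm's output pair, `gcd(m, m') = gcd(f₁, f₂)` (up to units). -/
theorem gcd_pairing_eq_gcd_solution {F : Type*} [Field F] [DecidableEq F]
    (n : ℕ) (hn : 1 ≤ n) (s : ℕ → F)
    (f₁ f₂ : Polynomial F) (hf : IsSolution n s f₁ f₂) (hdeg : f₁.natDegree ≤ n) :
    Associated
      (EuclideanDomain.gcd (f₂ * (bmRun s n).mu.1 - f₁ * (bmRun s n).mu.2)
        (f₂ * (bmRun s n).mu'.1 - f₁ * (bmRun s n).mu'.2))
      (EuclideanDomain.gcd f₁ f₂) := by
  obtain ⟨hdet, hnab, -⟩ := bmRun_det s n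
  set μ₁ := (bmRun s n).mu.1
  set μ₂ := (bmRun s n).mu.2
  set ν₁ := (bmRun s n).mu'.1
  set ν₂ := (bmRun s n).mu'.2
  set m := f₂ * μ₁ - f₁ * μ₂ with hm
  set m' := f₂ * ν₁ - f₁ * ν₂ with hm'
  have hu : IsUnit (Polynomial.C (bmRun s n).nabla) :=
    (Polynomial.isUnit_C).2 (isUnit_iff_ne_zero.2 hnab)
  have h1 : f₁ * Polynomial.C (bmRun s n).nabla = m' * μ₁ - m * ν₁ := by
    rw [← hdet, hm, hm']; ring
  have h2 : f₂ * Polynomial.C (bmRun s n).nabla = m' * μ₂ - m * ν₂ := by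
    rw [← hdet, hm, hm']; ring
  apply associated_of_dvd_dvd
  · apply EuclideanDomain.dvd_gcd
    · have : EuclideanDomain.gcd m m' ∣ f₁ * Polynomial.C (bmRun s n).nabla := by
        rw [h1]
        exact dvd_sub ((EuclideanDomain.gcd_dvd_right m m').mul_right _)
          ((EuclideanDomain.gcd_dvd_left m m').mul_right _)
      exact (hu.dvd_mul_right).mp this
    · have : EuclideanDomain.gcd m m' ∣ f₂ * Polynomial.C (bmRun s n).nabla := by
        rw [h2]
        exact dvd_sub ((EuclideanDomain.gcd_dvd_right m m').mul_right _)
          ((EuclideanDomain.gcd_dvd_left m m').mul_right _)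
      exact (hu.dvd_mul_right).mp this
  · apply EuclideanDomain.dvd_gcd
    · exact dvd_sub ((EuclideanDomain.gcd_dvd_right f₁ f₂).mul_right _)
        ((EuclideanDomain.gcd_dvd_left f₁ f₂).mul_right _)
    · exact dvd_sub ((EuclideanDomain.gcd_dvd_right f₁ f₂).mul_right _)
        ((EuclideanDomain.gcd_dvd_left f₁ f₂).mul_right _)
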